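/- arXiv:1804.08902 — 3 statements merged into one kernel-verified Lean document; each statement's English description precedes it below -/
import Mathlib

section
/- Let P = {1,…,n} and fix a repository on P in which the digraph (P, K) of known dependencies is acyclic, U = ∅, at most d packages are defective, and at most c pairs of non-defective packages weakly conflict. Let F be a family of subsets of P satisfying the (≤d+c, ≤2)-covering property, and let the query family be T = {c(v) : v ∈ F}, where c(v) is the K-closure of v. Then for all packages p, q ∈ P: p and q weakly conflict if and only if S(p) ∩ S(q) = ∅. -/
/-- A software repository on package set `Fin n`: known dependencies `K`,
unknown dependencies `U`, conflicts `C` (unordered pairs of distinct packages),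
and broken packages `B`. -/
structure Repo (n : ℕ) where
  K : Finset (Fin n × Fin n)
  U : Finset (Fin n × Fin n)
  C : Finset (Sym2 (Fin n))
  B : Finset (Fin n)
  hC : ∀ s ∈ C, ¬ s.IsDiag

/-- An installation `I` is successful if it avoids broken packages, is closed
under all (known and unknown) dependencies, and contains no conflicting pair. -/
def Successful {n : ℕ} (R : Repo n) (I : Finset (Fin n)) : Prop :=
  Disjoint I R.B ∧
  (∀ e ∈ R.K ∪ R.U, e.1 ∈ I → e.2 ∈ I) ∧
  (∀ s ∈ R.C, ¬ ∀ x ∈ s, x ∈ I)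

/-- A package is defective if no successful installation contains it. -/
def Defective {n : ℕ} (R : Repo n) (p : Fin n) : Prop :=
  ∀ I : Finset (Fin n), Successful R I → p ∉ I

/-- The set of defective packages. -/
def DefSet {n : ℕ} (R : Repo n) : Set (Fin n) := {p | Defective R p}

/-- Two packages weakly conflict if no successful installation contains both. -/
def WeakConflict {n : ℕ} (R : Repo n) (p q : Fin n) : Prop :=
  ∀ I : Finset (Fin n), Successful R I → ¬ (p ∈ I ∧ q ∈ I)

/-- `p` weakly depends on `q` if every successful installation containing `p`
also contains `q`. -/
def WeakDep {n : ℕ} (R : Repo n) (p q : Fin n) : Prop :=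
  ∀ I : Finset (Fin n), Successful R I → p ∈ I → q ∈ I

/-- The weakly-conflicting pairs of non-defective packages (each unordered pair
counted once via `<`). -/
def WeakConflictPairs {n : ℕ} (R : Repo n) : Set (Fin n × Fin n) :=
  {pq | pq.1 < pq.2 ∧ ¬ Defective R pq.1 ∧ ¬ Defective R pq.2 ∧
    WeakConflict R pq.1 pq.2}

/-- `(n,a,b)`-cover-free family. -/
def IsCFF (n a b : ℕ) (T : Finset (Finset (Fin n))) : Prop :=
  ∀ S₁ S₂ : Finset (Fin n), Disjoint S₁ S₂ → S₁.card = a → S₂.card = b →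
    ∃ v ∈ T, Disjoint v S₁ ∧ S₂ ⊆ v

/-- The `(≤a, ≤b)`-covering property. -/
def CoveringLE (n a b : ℕ) (F : Finset (Finset (Fin n))) : Prop :=
  ∀ S₁ S₂ : Finset (Fin n), Disjoint S₁ S₂ → S₁.card ≤ a →
    1 ≤ S₂.card → S₂.card ≤ b → ∃ v ∈ F, Disjoint v S₁ ∧ S₂ ⊆ v

/-- The digraph of known dependencies is acyclic. -/
def Acyclic {n : ℕ} (K : Finset (Fin n × Fin n)) : Prop :=
  ∀ p : Fin n, ¬ Relation.TransGen (fun x y => (x, y) ∈ K) p p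

open Classical in
/-- The `K`-closure of `v`: everything reachable from `v` along `K`-edges. -/
noncomputable def kclosure {n : ℕ} (K : Finset (Fin n × Fin n))
    (v : Finset (Fin n)) : Finset (Fin n) :=
  Finset.univ.filter
    (fun p => ∃ q ∈ v, Relation.ReflTransGen (fun x y => (x, y) ∈ K) q p)

/-- `Sset R T p`: the queries of `T` that are successful installations
containing `p`. -/
def Sset {n : ℕ} (R : Repo n) (T : Finset (Finset (Fin n))) (p : Fin n) :
    Set (Finset (Fin n)) :=
  {t | t ∈ T ∧ Successful R t ∧ p ∈ t}



section Aux

open Classical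

lemma mem_kclosure {n : ℕ} (K : Finset (Fin n × Fin n)) (v : Finset (Fin n))
    (a : Fin n) : a ∈ kclosure K v ↔
      ∃ q ∈ v, Relation.ReflTransGen (fun x y => (x, y) ∈ K) q a := by
  simp [kclosure]

lemma succ_closed {n : ℕ} (R : Repo n) {I : Finset (Fin n)}
    (hI : Successful R I) {x a : Fin n} (hx : x ∈ I)
    (h : Relation.ReflTransGen (fun u w => (u, w) ∈ R.K) x a) : a ∈ I := by
  induction h with
  | refl => exact hx
  | tail _ hedge ih => exact hI.2.1 _ (Finset.mem_union_left _ hedge) ih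

lemma wc_symm {n : ℕ} (R : Repo n) {x y : Fin n} (h : WeakConflict R x y) :
    WeakConflict R y x := fun I hI hxy => h I hI ⟨hxy.2, hxy.1⟩

end Aux

/-- With acyclic known dependencies, no unknown dependencies, at most `d`
defects and at most `c` weakly-conflicting pairs of non-defective packages,
the `K`-closures of a `(≤d+c, ≤2)`-covering family identify the weak
conflicts: `p, q` weakly conflict iff no successful query contains both. -/
theorem conflict_identification_known_deps (n d c : ℕ) (R : Repo n)
    (hacyc : Acyclic R.K) (hU : R.U = ∅)
    (hd : (DefSet R).ncard ≤ d)
    (hc : (WeakConflictPairs R).ncard ≤ c)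
    (F : Finset (Finset (Fin n))) (hF : CoveringLE n (d + c) 2 F) :
    ∀ p q : Fin n,
      WeakConflict R p q ↔
        Sset R (F.image (kclosure R.K)) p ∩
          Sset R (F.image (kclosure R.K)) q = ∅ := by
  classical
  intro p q
  constructor
  · intro h
    ext t
    simp only [Set.mem_inter_iff, Set.mem_empty_iff_false, iff_false]
    rintro ⟨⟨_, hs, hpt⟩, ⟨_, _, hqt⟩⟩
    exact h t hs ⟨hpt, hqt⟩
  · intro hS I hI hpq
    obtain ⟨hp, hq⟩ := hpq
    have hpd : ¬ Defective R p := fun h => h I hI hp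
    have hqd : ¬ Defective R q := fun h => h I hI hq
    set f : Fin n × Fin n → Fin n :=
      fun pq => if pq.1 = p ∨ pq.1 = q then pq.2 else pq.1 with hf
    set D : Finset (Fin n) := (Set.toFinite (DefSet R)).toFinset with hD
    set W : Finset (Fin n) :=
      ((Set.toFinite (WeakConflictPairs R)).toFinset).image f with hW
    set S₁ : Finset (Fin n) := D ∪ W with hS₁
    set S₂ : Finset (Fin n) := {p, q} with hS₂def
    have hfnpq : ∀ pq ∈ WeakConflictPairs R, f pq ≠ p ∧ f pq ≠ q := by
      rintro ⟨x, y⟩ ⟨hlt, hxd, hyd, hwc⟩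
      simp only [hf]
      by_cases hcond : x = p ∨ x = q
      · simp only [hcond, if_pos]
        rcases hcond with rfl | rfl
        · constructor
          · exact fun h => absurd h (Ne.symm (ne_of_lt hlt))
          · rintro rfl; exact hwc I hI ⟨hp, hq⟩
        · constructor
          · rintro rfl; exact hwc I hI ⟨hq, hp⟩
          · exact fun h => absurd h (Ne.symm (ne_of_lt hlt))
      · simp only [hcond, if_neg, not_false_iff]
        push_neg at hcond
        exact hcond
    have hDmem : ∀ x : Fin n, x ∈ D ↔ Defective R x := by
      intro x
      simp [hD, DefSet, Set.Finite.mem_toFinset]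
    have hdisj : Disjoint S₁ S₂ := by
      rw [Finset.disjoint_right]
      intro a ha
      have ha' : a = p ∨ a = q := by
        simpa [hS₂def] using ha
      intro haS₁
      rcases Finset.mem_union.mp haS₁ with hD' | hW'
      · rcases ha' with rfl | rfl
        · exact hpd ((hDmem a).mp hD')
        · exact hqd ((hDmem a).mp hD')
      · obtain ⟨pq, hpqmem, hfeq⟩ := Finset.mem_image.mp hW'
        have hpq' : pq ∈ WeakConflictPairs R := by
          simpa [Set.Finite.mem_toFinset] using hpqmem
        obtain ⟨h1, h2⟩ := hfnpq pq hpq'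
        rcases ha' with rfl | rfl
        · exact h1 hfeq
        · exact h2 hfeq
    have hcard1 : S₁.card ≤ d + c := by
      calc S₁.card ≤ D.card + W.card := Finset.card_union_le _ _
        _ ≤ d + c := by
            have h1 : D.card ≤ d := by
              rw [hD, ← Set.ncard_eq_toFinset_card _ (Set.toFinite (DefSet R))]
              exact hd
            have h2 : W.card ≤ c := by
              calc W.card ≤ ((Set.toFinite (WeakConflictPairs R)).toFinset).card :=
                    Finset.card_image_le
                _ ≤ c := by rw [← Set.ncard_eq_toFinset_card _ (Set.toFinite (WeakConflictPairs R))]; exact hc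
            omega
    have hS₂card1 : 1 ≤ S₂.card := Finset.card_pos.mpr ⟨p, by simp [hS₂def]⟩
    have hS₂card2 : S₂.card ≤ 2 := by
      simpa [hS₂def] using Finset.card_insert_le p ({q} : Finset (Fin n))
    obtain ⟨v, hvF, hvS₁, hS₂v⟩ := hF S₁ S₂ hdisj hcard1 hS₂card1 hS₂card2
    have hpv : p ∈ v := hS₂v (by simp [hS₂def])
    have hqv : q ∈ v := hS₂v (by simp [hS₂def])
    -- every element of v is non-defective
    have hvnd : ∀ x ∈ v, ¬ Defective R x := by
      intro x hx hdef
      exact (Finset.disjoint_left.mp hvS₁) hx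
        (Finset.mem_union_left _ ((hDmem x).mpr hdef))
    -- any two distinct elements of v do not weakly conflict
    have hvnc : ∀ x ∈ v, ∀ y ∈ v, x ≠ y → ¬ WeakConflict R x y := by
      intro x hx y hy hne hwc
      rcases lt_trichotomy x y with hlt | heq | hlt
      · have hmem : (x, y) ∈ WeakConflictPairs R :=
          ⟨hlt, hvnd x hx, hvnd y hy, hwc⟩
        have hfW : f (x, y) ∈ W := by
          rw [hW]
          exact Finset.mem_image_of_mem f (by simpa [Set.Finite.mem_toFinset] using hmem)
        have hfv : f (x, y) ∈ v := by
          simp only [hf]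
          split <;> assumption
        exact (Finset.disjoint_left.mp hvS₁) hfv (Finset.mem_union_right _ hfW)
      · exact hne heq
      · have hmem : (y, x) ∈ WeakConflictPairs R :=
          ⟨hlt, hvnd y hy, hvnd x hx, wc_symm R hwc⟩
        have hfW : f (y, x) ∈ W := by
          rw [hW]
          exact Finset.mem_image_of_mem f (by simpa [Set.Finite.mem_toFinset] using hmem)
        have hfv : f (y, x) ∈ v := by
          simp only [hf]
          split <;> assumption
        exact (Finset.disjoint_left.mp hvS₁) hfv (Finset.mem_union_right _ hfW)
    -- the closure of v is successful
    have hsucc : Successful R (kclosure R.K v) := by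
      refine ⟨?_, ?_, ?_⟩
      · rw [Finset.disjoint_left]
        intro b hb hbB
        obtain ⟨x, hx, hpath⟩ := (mem_kclosure R.K v b).mp hb
        have hnd := hvnd x hx
        rw [Defective] at hnd
        push_neg at hnd
        obtain ⟨J, hJ, hxJ⟩ := hnd
        have hbJ : b ∈ J := succ_closed R hJ hxJ hpath
        exact (Finset.disjoint_left.mp hJ.1) hbJ hbB
      · intro e he h1
        have heK : e ∈ R.K := by
          rcases Finset.mem_union.mp he with h | h
          · exact h
          · rw [hU] at h; exact absurd h (Finset.notMem_empty _)
        obtain ⟨x, hx, hpath⟩ := (mem_kclosure R.K v e.1).mp h1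
        exact (mem_kclosure R.K v e.2).mpr ⟨x, hx, hpath.tail heK⟩
      · intro s hsC hall
        induction s using Sym2.ind with
        | _ a b =>
          have ha : a ∈ kclosure R.K v := hall a (by simp)
          have hb : b ∈ kclosure R.K v := hall b (by simp)
          obtain ⟨x, hx, hpa⟩ := (mem_kclosure R.K v a).mp ha
          obtain ⟨y, hy, hpb⟩ := (mem_kclosure R.K v b).mp hb
          -- obtain a successful J containing x and y
          have hJ : ∃ J, Successful R J ∧ x ∈ J ∧ y ∈ J := by
            by_cases hxy : x = y
            · subst hxy
              have hnd := hvnd x hx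
              rw [Defective] at hnd
              push_neg at hnd
              obtain ⟨J, hJ, hxJ⟩ := hnd
              exact ⟨J, hJ, hxJ, hxJ⟩
            · have hnc := hvnc x hx y hy hxy
              rw [WeakConflict] at hnc
              push_neg at hnc
              obtain ⟨J, hJ, hxJ, hyJ⟩ := hnc
              exact ⟨J, hJ, hxJ, hyJ⟩
          obtain ⟨J, hJ, hxJ, hyJ⟩ := hJ
          have haJ : a ∈ J := succ_closed R hJ hxJ hpa
          have hbJ : b ∈ J := succ_closed R hJ hyJ hpb
          exact hJ.2.2 _ hsC (by
            intro z hz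
            rcases Sym2.mem_iff.mp hz with rfl | rfl
            · exact haJ
            · exact hbJ)
    have hpk : p ∈ kclosure R.K v :=
      (mem_kclosure R.K v p).mpr ⟨p, hpv, Relation.ReflTransGen.refl⟩
    have hqk : q ∈ kclosure R.K v :=
      (mem_kclosure R.K v q).mpr ⟨q, hqv, Relation.ReflTransGen.refl⟩
    have hmemT : kclosure R.K v ∈ F.image (kclosure R.K) :=
      Finset.mem_image_of_mem _ hvF
    have : kclosure R.K v ∈
        Sset R (F.image (kclosure R.K)) p ∩ Sset R (F.image (kclosure R.K)) q :=
      ⟨⟨hmemT, hsucc, hpk⟩, ⟨hmemT, hsucc, hqk⟩⟩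
    rw [hS] at this
    exact this
end

section
/- Let P = {1,…,n} and fix a repository on P in which the digraph (P, K) of known dependencies is acyclic, U = ∅, at most d packages are defective, and at most c pairs of non-defective packages weakly conflict. Let F be a family of subsets of P satisfying the (≤d+c, ≤1)-covering property, and let the query family be T = {c(v) : v ∈ F}, where c(v) is the K-closure of v. Then for every package p ∈ P: p is defective if and only if S(p) = ∅. (Hence an adaptive algorithm may first learn all defects with such a family and then learn all weak conflicts among the remaining packages.) -/
open Classical in
private lemma closure_mem_succ {n : ℕ} (R : Repo n) (I : Finset (Fin n))
    (hI : Successful R I) {a x : Fin n} (ha : a ∈ I)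
    (h : Relation.ReflTransGen (fun x y => (x, y) ∈ R.K) a x) : x ∈ I := by
  induction h with
  | refl => exact ha
  | tail hxy hk ih => exact hI.2.1 _ (Finset.mem_union_left _ hk) ih

private lemma not_defective_iff {n : ℕ} (R : Repo n) (p : Fin n) :
    ¬ Defective R p ↔ ∃ I, Successful R I ∧ p ∈ I := by
  unfold Defective; push_neg; rfl

/-- With acyclic known dependencies, no unknown dependencies, at most `d`
defects and at most `c` weakly-conflicting pairs of non-defective packages,
the `K`-closures of a `(≤d+c, ≤1)`-covering family already identify the
defects (the first stage of the adaptive algorithm). -/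
theorem adaptive_defect_identification (n d c : ℕ) (R : Repo n)
    (hacyc : Acyclic R.K) (hU : R.U = ∅)
    (hd : (DefSet R).ncard ≤ d)
    (hc : (WeakConflictPairs R).ncard ≤ c)
    (F : Finset (Finset (Fin n))) (hF : CoveringLE n (d + c) 1 F) :
    ∀ p : Fin n,
      Defective R p ↔ Sset R (F.image (kclosure R.K)) p = ∅ := by
  intro p
  constructor
  · intro hdef
    ext t
    simp only [Sset, Set.mem_setOf_eq, Set.mem_empty_iff_false, iff_false, not_and]
    intro _ hs hp
    exact hdef t hs hp
  · intro hS
    by_contra hnd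
    classical
    have hfinD : (DefSet R).Finite := Set.toFinite _
    have hfinW : (WeakConflictPairs R).Finite := Set.toFinite _
    set D : Finset (Fin n) := hfinD.toFinset with hD
    set W : Finset (Fin n) :=
      hfinW.toFinset.image (fun pq => if pq.1 = p then pq.2 else pq.1) with hW
    have hpD : p ∉ D := by
      simp only [hD, Set.Finite.mem_toFinset]
      exact hnd
    have hpW : p ∉ W := by
      simp only [hW, Finset.mem_image, Set.Finite.mem_toFinset]
      rintro ⟨pq, hpq, heq⟩
      have hlt : pq.1 < pq.2 := hpq.1
      by_cases h1 : pq.1 = p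
      · rw [if_pos h1] at heq
        rw [h1, heq] at hlt
        exact lt_irrefl p hlt
      · rw [if_neg h1] at heq
        exact h1 heq
    have hcardD : D.card ≤ d := by
      rw [hD, ← Set.ncard_eq_toFinset_card _ hfinD]
      exact hd
    have hcardW : W.card ≤ c := by
      refine le_trans Finset.card_image_le ?_
      rw [← Set.ncard_eq_toFinset_card _ hfinW]
      exact hc
    obtain ⟨v, hvF, hvdisj, hpv⟩ :=
      hF (D ∪ W) {p}
        (Finset.disjoint_singleton_right.mpr (by simp [hpD, hpW]))
        (le_trans (Finset.card_union_le _ _) (add_le_add hcardD hcardW))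
        (by simp) (by simp)
    have hpv' : p ∈ v := hpv (Finset.mem_singleton_self p)
    have hmem : ∀ x, x ∈ kclosure R.K v ↔
        ∃ a ∈ v, Relation.ReflTransGen (fun x y => (x, y) ∈ R.K) a x := by
      intro x
      simp [kclosure]
    have hvnd : ∀ a ∈ v, ¬ Defective R a := by
      intro a hav hdefa
      have : a ∈ D := by simp [hD, Set.Finite.mem_toFinset, DefSet, hdefa]
      exact (Finset.disjoint_left.mp hvdisj hav) (Finset.mem_union_left _ this)
    have hsucc : Successful R (kclosure R.K v) := by
      refine ⟨?_, ?_, ?_⟩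
      · rw [Finset.disjoint_left]
        intro x hx hxB
        obtain ⟨a, hav, hreach⟩ := (hmem x).mp hx
        obtain ⟨I, hI, haI⟩ := (not_defective_iff R a).mp (hvnd a hav)
        have hxI : x ∈ I := closure_mem_succ R I hI haI hreach
        exact (Finset.disjoint_left.mp hI.1 hxI) hxB
      · intro e he h1
        rw [hU, Finset.union_empty] at he
        obtain ⟨a, hav, hreach⟩ := (hmem e.1).mp h1
        exact (hmem e.2).mpr ⟨a, hav, hreach.tail he⟩
      · intro s hs hall
        induction s using Sym2.ind with
        | _ x y =>
          have hxy : x ≠ y := by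
            intro h
            exact R.hC _ hs (by simp [h])
          have hx : x ∈ kclosure R.K v := hall x (by simp)
          have hy : y ∈ kclosure R.K v := hall y (by simp)
          obtain ⟨a, hav, hra⟩ := (hmem x).mp hx
          obtain ⟨b, hbv, hrb⟩ := (hmem y).mp hy
          by_cases hab : a = b
          · obtain ⟨I, hI, haI⟩ := (not_defective_iff R a).mp (hvnd a hav)
            have hxI : x ∈ I := closure_mem_succ R I hI haI hra
            have hyI : y ∈ I := closure_mem_succ R I hI (hab ▸ haI) hrb
            refine hI.2.2 _ hs ?_
            intro z hz
            rcases Sym2.mem_iff.mp hz with rfl | rfl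
            · exact hxI
            · exact hyI
          · have hwc : WeakConflict R a b := by
              rintro I hI ⟨haI, hbI⟩
              have hxI : x ∈ I := closure_mem_succ R I hI haI hra
              have hyI : y ∈ I := closure_mem_succ R I hI hbI hrb
              refine hI.2.2 _ hs ?_
              intro z hz
              rcases Sym2.mem_iff.mp hz with rfl | rfl
              · exact hxI
              · exact hyI
            have hwc' : WeakConflict R b a := by
              rintro I hI ⟨hbI, haI⟩
              exact hwc I hI ⟨haI, hbI⟩
            have hpair : ∃ q r : Fin n, q ∈ v ∧ r ∈ v ∧ (q, r) ∈ hfinW.toFinset := by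
              rcases lt_or_gt_of_ne hab with h | h
              · refine ⟨a, b, hav, hbv, ?_⟩
                simp only [Set.Finite.mem_toFinset]
                exact ⟨h, hvnd a hav, hvnd b hbv, hwc⟩
              · refine ⟨b, a, hbv, hav, ?_⟩
                simp only [Set.Finite.mem_toFinset]
                exact ⟨h, hvnd b hbv, hvnd a hav, hwc'⟩
            obtain ⟨q, r, hqv, hrv, hqr⟩ := hpair
            have hchoice : (if q = p then r else q) ∈ W := by
              rw [hW, Finset.mem_image]
              exact ⟨(q, r), hqr, rfl⟩
            have hchoicev : (if q = p then r else q) ∈ v := by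
              by_cases hqp : q = p
              · simpa [hqp] using hrv
              · simpa [hqp] using hqv
            exact (Finset.disjoint_left.mp hvdisj hchoicev)
              (Finset.mem_union_right _ hchoice)
    have hpt : p ∈ kclosure R.K v := (hmem p).mpr ⟨p, hpv', Relation.ReflTransGen.refl⟩
    have hmemS : kclosure R.K v ∈ Sset R (F.image (kclosure R.K)) p :=
      ⟨Finset.mem_image_of_mem _ hvF, hsucc, hpt⟩
    rw [hS] at hmemS
    exact hmemS
end

section
/- Let d ≥ 0, u ≥ 0, c ≥ 1 and n ≥ d + c + u + 1. Let T be a family of subsets of P = {1,…,n} with the following property: for every two repositories on P with K = ∅, at most u unknown dependencies (|U| ≤ u), at most d defective packages, and at most c weakly-conflicting pairs of non-defective packages each, if every query in T receives identical feedback under both repositories then the two repositories have the same weak-conflict relation. Then T is an (n, d+c−1, u+2)-cover-free family. -/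
/-! If disjoint `S₁`, `S₂` are not separated by any query, pick distinct `p, q ∈ S₂` and
split `S₁` into a set `W` of `c - 1` packages and a set `D` of `d` packages. Break `D`, let `q`
depend on the rest of `S₂` and conflict with `W`. Adding the conflict `{p, q}` changes the
weak-conflict relation, but only a successful query containing `S₂` and avoiding `S₁` could
notice it. -/

open Finset

section StarRepo

variable {n : ℕ}

lemma WeakConflict.symm {R : Repo n} {p q : Fin n} (h : WeakConflict R p q) :
    WeakConflict R q p :=
  fun I hI hqp => h I hI hqp.symm

lemma Defective.of_mem_B {R : Repo n} {p : Fin n} (hp : p ∈ R.B) : Defective R p :=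
  fun _ hI hpI => disjoint_left.mp hI.1 hpI hp

lemma weakConflict_self_iff {R : Repo n} {p : Fin n} : WeakConflict R p p ↔ Defective R p :=
  ⟨fun h I hI hpI => h I hI ⟨hpI, hpI⟩, fun h I hI hpI => h I hI hpI.1⟩

def starRepo (q : Fin n) (A W D : Finset (Fin n)) : Repo n where
  K := ∅
  U := A.image (q, ·)
  C := (W.erase q).image (s(q, ·))
  B := D
  hC := by
    simp only [mem_image, mem_erase]
    rintro _ ⟨w, ⟨hwq, -⟩, rfl⟩
    exact Sym2.mk_isDiag_iff.not.mpr (Ne.symm hwq)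

variable {q : Fin n} {A W D I : Finset (Fin n)}

lemma successful_starRepo_iff :
    Successful (starRepo q A W D) I ↔
      Disjoint I D ∧ (q ∈ I → A ⊆ I ∧ Disjoint I (W.erase q)) := by
  simp only [Successful, starRepo, empty_union, forall_mem_image, Sym2.mem_iff,
    forall_eq_or_imp, forall_eq]
  refine and_congr_right fun _ => ⟨fun ⟨hA, hW⟩ hqI => ⟨fun a ha => hA ha hqI, ?_⟩,
    fun h => ⟨fun a ha hqI => (h hqI).1 ha, fun w hw ⟨hqI, hwI⟩ => ?_⟩⟩
  · exact disjoint_left.mpr fun w hwI hw => hW hw ⟨hqI, hwI⟩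
  · exact disjoint_left.mp (h hqI).2 hwI hw

lemma successful_starRepo_of_notMem (hqI : q ∉ I) (hID : Disjoint I D) :
    Successful (starRepo q A W D) I :=
  successful_starRepo_iff.mpr ⟨hID, fun hq => absurd hq hqI⟩

lemma successful_starRepo_of_subset (hAI : A ⊆ I) (hID : Disjoint I D)
    (hIW : Disjoint I (W.erase q)) : Successful (starRepo q A W D) I :=
  successful_starRepo_iff.mpr ⟨hID, fun _ => ⟨hAI, hIW⟩⟩

lemma successful_starRepo_insert_iff {p : Fin n} (hpq : p ≠ q) :
    Successful (starRepo q A (insert p W) D) I ↔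
      Successful (starRepo q A W D) I ∧ ¬ (q ∈ I ∧ p ∈ I) := by
  simp only [successful_starRepo_iff, erase_insert_of_ne hpq, disjoint_insert_right]
  tauto

lemma successful_starRepo_insert_iff_of_not_cover {p : Fin n} (hpq : p ≠ q)
    (hI : ¬ (insert p (insert q A) ⊆ I ∧ Disjoint I (D ∪ W.erase q))) :
    Successful (starRepo q A (insert p W) D) I ↔ Successful (starRepo q A W D) I := by
  rw [successful_starRepo_insert_iff hpq, and_iff_left_iff_imp]
  rintro hI' ⟨hqI, hpI⟩
  obtain ⟨hID, hAI, hIW⟩ := successful_starRepo_iff.mp hI' |>.imp_right (· hqI)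
  exact hI ⟨insert_subset hpI (insert_subset hqI hAI), disjoint_union_right.mpr ⟨hID, hIW⟩⟩

lemma weakConflict_starRepo_of_mem {p : Fin n} (hpq : p ≠ q) (hpW : p ∈ W) :
    WeakConflict (starRepo q A W D) q p := by
  rintro I hI ⟨hqI, hpI⟩
  exact disjoint_left.mp ((successful_starRepo_iff.mp hI).2 hqI).2 hpI (mem_erase.mpr ⟨hpq, hpW⟩)

lemma not_weakConflict_starRepo_of_notMem (hqD : q ∉ D) (hAD : Disjoint A D)
    (hAW : Disjoint A W) {y : Fin n} (hyD : y ∉ D) (hyW : y ∉ W.erase q) :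
    ¬ WeakConflict (starRepo q A W D) q y := by
  refine fun h => h (insert y (insert q A)) (successful_starRepo_of_subset ?_ ?_ ?_)
    ⟨mem_insert_of_mem (mem_insert_self q A), mem_insert_self y _⟩
  · exact (subset_insert q A).trans (subset_insert y _)
  · simp only [disjoint_insert_left]
    exact ⟨hyD, hqD, hAD⟩
  · simp only [disjoint_insert_left]
    exact ⟨hyW, notMem_erase q W, hAW.mono_right (erase_subset q W)⟩

lemma not_weakConflict_starRepo_of_ne {x y : Fin n} (hxD : x ∉ D) (hyD : y ∉ D)
    (hxq : x ≠ q) (hyq : y ≠ q) : ¬ WeakConflict (starRepo q A W D) x y := by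
  refine fun h => h {x, y} (successful_starRepo_of_notMem ?_ ?_)
    ⟨mem_insert_self x {y}, mem_insert_of_mem (mem_singleton_self y)⟩
  · simpa only [mem_insert, mem_singleton, not_or] using ⟨hxq.symm, hyq.symm⟩
  · simpa only [disjoint_insert_left, disjoint_singleton_left] using ⟨hxD, hyD⟩

lemma defSet_starRepo (hqD : q ∉ D) (hAD : Disjoint A D) (hAW : Disjoint A W) :
    DefSet (starRepo q A W D) = D := by
  ext x
  refine ⟨fun hx => ?_, fun hx => Defective.of_mem_B hx⟩
  by_contra hxD
  replace hx : WeakConflict _ x x := weakConflict_self_iff.mpr hx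
  by_cases hxq : x = q
  · subst hxq
    exact not_weakConflict_starRepo_of_notMem hqD hAD hAW hqD (notMem_erase x W) hx
  · exact not_weakConflict_starRepo_of_ne hxD hxD hxq hxq hx

lemma ncard_defSet_starRepo (hqD : q ∉ D) (hAD : Disjoint A D) (hAW : Disjoint A W) :
    (DefSet (starRepo q A W D)).ncard = D.card := by
  rw [defSet_starRepo hqD hAD hAW, Set.ncard_coe_finset]

lemma weakConflict_starRepo_cases (hAD : Disjoint A D) (hAW : Disjoint A W) {x y : Fin n}
    (hxD : x ∉ D) (hyD : y ∉ D) (h : WeakConflict (starRepo q A W D) x y) :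
    (x = q ∧ y ∈ W) ∨ (y = q ∧ x ∈ W) := by
  by_cases hxq : x = q
  · subst hxq
    exact .inl ⟨rfl, by_contra fun hyW => not_weakConflict_starRepo_of_notMem hxD hAD hAW hyD
      (fun hy => hyW (mem_of_mem_erase hy)) h⟩
  by_cases hyq : y = q
  · subst hyq
    exact .inr ⟨rfl, by_contra fun hxW => not_weakConflict_starRepo_of_notMem hyD hAD hAW hxD
      (fun hx => hxW (mem_of_mem_erase hx)) h.symm⟩
  exact absurd h (not_weakConflict_starRepo_of_ne hxD hyD hxq hyq)

lemma ncard_weakConflictPairs_starRepo_le (hAD : Disjoint A D) (hAW : Disjoint A W) :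
    (WeakConflictPairs (starRepo q A W D)).ncard ≤ W.card := by
  calc _ ≤ ((fun w => (min q w, max q w)) '' W).ncard := Set.ncard_le_ncard ?_ (Set.toFinite _)
    _ ≤ W.card := (Set.ncard_image_le W.finite_toSet).trans (Set.ncard_coe_finset W).le
  rintro ⟨x, y⟩ ⟨hxy, hx, hy, h⟩
  rcases weakConflict_starRepo_cases hAD hAW (fun hxD => hx (Defective.of_mem_B hxD))
    (fun hyD => hy (Defective.of_mem_B hyD)) h with ⟨rfl, hyW⟩ | ⟨rfl, hxW⟩
  · exact ⟨y, hyW, by simp [hxy.le]⟩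
  · exact ⟨x, hxW, by simp [hxy.le]⟩

end StarRepo

theorem full_learning_CFF_lower_bound_general (n u c d : ℕ) (hc : 1 ≤ c)
    (T : Finset (Finset (Fin n)))
    (hT : ∀ R₁ R₂ : Repo n,
      R₁.K = ∅ → R₂.K = ∅ →
      R₁.U.card ≤ u → R₂.U.card ≤ u →
      (DefSet R₁).ncard ≤ d → (DefSet R₂).ncard ≤ d →
      (WeakConflictPairs R₁).ncard ≤ c → (WeakConflictPairs R₂).ncard ≤ c →
      (∀ t ∈ T, Successful R₁ t ↔ Successful R₂ t) →
      (∀ p q : Fin n, WeakConflict R₁ p q ↔ WeakConflict R₂ p q)) :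
    IsCFF n (d + c - 1) (u + 2) T := by
  intro S₁ S₂ hdisj h₁ h₂
  by_contra! hmiss
  obtain ⟨p, hp, q, hq, hpq⟩ := one_lt_card.mp (by omega : 1 < S₂.card)
  obtain ⟨W, hWS₁, hW⟩ := exists_subset_card_eq (show c - 1 ≤ S₁.card by omega)
  have hqp : q ∈ S₂.erase p := mem_erase.mpr ⟨hpq.symm, hq⟩
  have hS₂S₁ : ∀ {x}, x ∈ S₂ → x ∉ S₁ := fun hx h => disjoint_left.mp hdisj h hx
  set A := (S₂.erase p).erase q
  set D := S₁ \ W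
  have hA : A.card = u := by rw [card_erase_of_mem hqp, card_erase_of_mem hp]; omega
  have hD : D.card = d := by rw [card_sdiff_of_subset hWS₁]; omega
  have hAS₂ : A ⊆ S₂ := (erase_subset q _).trans (erase_subset p S₂)
  have hAD : Disjoint A D := hdisj.symm.mono hAS₂ sdiff_subset
  have hAW : Disjoint A W := hdisj.symm.mono hAS₂ hWS₁
  have hAW' : Disjoint A (insert p W) :=
    disjoint_insert_right.mpr ⟨notMem_erase p S₂ ∘ mem_of_mem_erase, hAW⟩
  have hqD : q ∉ D := fun h => hS₂S₁ hq (mem_sdiff.mp h).1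
  set R₁ := starRepo q A (insert p W) D
  set R₂ := starRepo q A W D
  have hfeedback : ∀ t ∈ T, Successful R₁ t ↔ Successful R₂ t := fun t ht =>
    successful_starRepo_insert_iff_of_not_cover hpq fun ⟨h₂, h₁⟩ => hmiss t ht
      (by rwa [erase_eq_of_notMem (hS₂S₁ hq ∘ (hWS₁ ·)), sdiff_union_of_subset hWS₁] at h₁)
      (by rwa [insert_erase hqp, insert_erase hp] at h₂)
  have hconflict₁ : WeakConflict R₁ q p := weakConflict_starRepo_of_mem hpq (mem_insert_self p W)
  have hconflict₂ : ¬ WeakConflict R₂ q p :=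
    not_weakConflict_starRepo_of_notMem hqD hAD hAW (fun h => hS₂S₁ hp (mem_sdiff.mp h).1)
      (fun h => hS₂S₁ hp (hWS₁ (mem_of_mem_erase h)))
  have hiff := hT R₁ R₂ rfl rfl (card_image_le.trans hA.le) (card_image_le.trans hA.le)
    ((ncard_defSet_starRepo hqD hAD hAW').trans hD).le
    ((ncard_defSet_starRepo hqD hAD hAW).trans hD).le
    (((ncard_weakConflictPairs_starRepo_le hAD hAW').trans (card_insert_le p W)).trans (by omega))
    ((ncard_weakConflictPairs_starRepo_le hAD hAW).trans (by omega)) hfeedback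
  exact hconflict₂ ((hiff q p).mp hconflict₁)

/-- Any non-adaptive query family solving Full Learning of weak conflicts with
at most `u` unknown dependencies, at most `d` defects and at most `c`
weakly-conflicting pairs of non-defective packages is an
`(n, d+c-1, u+2)`-cover-free family. -/
theorem full_learning_CFF_lower_bound (n u c d : ℕ) (hc : 1 ≤ c)
    (hn : d + c + u + 1 ≤ n) (T : Finset (Finset (Fin n)))
    (hT : ∀ R₁ R₂ : Repo n,
      R₁.K = ∅ → R₂.K = ∅ →
      R₁.U.card ≤ u → R₂.U.card ≤ u →
      (DefSet R₁).ncard ≤ d → (DefSet R₂).ncard ≤ d →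
      (WeakConflictPairs R₁).ncard ≤ c → (WeakConflictPairs R₂).ncard ≤ c →
      (∀ t ∈ T, Successful R₁ t ↔ Successful R₂ t) →
      (∀ p q : Fin n, WeakConflict R₁ p q ↔ WeakConflict R₂ p q)) :
    IsCFF n (d + c - 1) (u + 2) T :=
  full_learning_CFF_lower_bound_general n u c d hc T hT
end
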